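/- arXiv:1902.09443 — 5 statements merged into one kernel-verified Lean document; each statement's English description precedes it below -/
import Mathlib

section
/- Fix an integer m ≥ 1 and let q = log((2m+1)/(2m))/log((m+1)/m). The function g : [m+1, ∞) → R defined by g(j) = j·(m/(j−m))^q attains its minimum over integers j ≥ m+1 at j = 2m or j = 2m+1, and this minimum value equals 2m. -/
/-!
Write `X = j - m` and `φ u = log (m + exp u)`, a convex function. Then
`log (g j) = φ (log X) - q * (log X - log m)`, and `q` is exactly the slope of the chord of `φ`
between `log m` and `log (m + 1)`. A convex function lies above the line through a chord outside
the chord's interval, and `log X` avoids `(log m, log (m + 1))` because `X` is an integer, so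
`log (g j) ≥ φ (log m) = log (2m)`, with equality at the endpoints `X = m` and `X = m + 1`.
-/

open Real Set

theorem ConvexOn.secant_le_of_notMem_Ioo {𝕜 : Type*} [Field 𝕜] [LinearOrder 𝕜]
    [IsStrictOrderedRing 𝕜] {s : Set 𝕜} {f : 𝕜 → 𝕜} (hf : ConvexOn 𝕜 s f) {a b x : 𝕜}
    (ha : a ∈ s) (hb : b ∈ s) (hx : x ∈ s) (hab : a < b) (hxab : x ∉ Ioo a b) :
    f a + slope f a b * (x - a) ≤ f x := by
  have hb' : b ∈ s \ {a} := ⟨hb, hab.ne'⟩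
  have hfx : (x - a) * slope f a x = f x - f a := sub_smul_slope f a x
  rcases lt_trichotomy x a with hxa | rfl | hax
  · have hslope := hf.slope_mono ha ⟨hx, hxa.ne⟩ hb' (hxa.trans hab).le
    linarith [mul_le_mul_of_nonpos_left hslope (sub_nonpos.2 hxa.le)]
  · simp
  · have hbx : b ≤ x := not_lt.1 fun hxb => hxab ⟨hax, hxb⟩
    have hslope := hf.slope_mono ha hb' ⟨hx, hax.ne'⟩ hbx
    linarith [mul_le_mul_of_nonneg_left hslope (sub_nonneg.2 hax.le)]

theorem convexOn_log_add_exp {c : ℝ} (hc : 0 ≤ c) :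
    ConvexOn ℝ univ fun u => log (c + exp u) := by
  have hpos : ∀ u, 0 < c + exp u := fun u => by positivity
  have hderiv : ∀ u, HasDerivAt (fun u => log (c + exp u)) (exp u / (c + exp u)) u :=
    fun u => ((hasDerivAt_exp u).const_add c).log (hpos u).ne'
  refine Monotone.convexOn_univ_of_deriv (fun u => (hderiv u).differentiableAt) ?_
  rw [show deriv (fun u => log (c + exp u)) = fun u => exp u / (c + exp u) from
    funext fun u => (hderiv u).deriv]
  intro u v huv
  rw [div_le_div_iff₀ (hpos u) (hpos v)]
  nlinarith [exp_le_exp.2 huv]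

theorem slope_log_add_exp_log {M : ℝ} (hM : 0 < M) :
    slope (fun u => log (M + exp u)) (log M) (log (M + 1)) =
      log ((2 * M + 1) / (2 * M)) / log ((M + 1) / M) := by
  rw [slope_def_field, exp_log hM, exp_log (by positivity),
    log_div (by positivity) (by positivity), log_div (by positivity) hM.ne']
  ring_nf

theorem add_mul_div_rpow_eq_exp {M X : ℝ} (hM : 0 < M) (hX : 0 < X) (q : ℝ) :
    (M + X) * (M / X) ^ q = exp (log (M + X) - q * (log X - log M)) := by
  rw [sub_eq_add_neg, exp_add, exp_log (by positivity), rpow_def_of_pos (div_pos hM hX),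
    log_div hM.ne' hX.ne']
  ring_nf

/-- With `q = log((2m+1)/(2m))/log((m+1)/m)`, the function
`g j = j·(m/(j−m))^q` over integers `j ≥ m+1` has minimum value `2m`,
attained at `j = 2m` and at `j = 2m+1`. -/
theorem equal_mass_min_at_2m (m : ℕ) (hm : 1 ≤ m)
    (q : ℝ) (hq : q = Real.log ((2 * m + 1) / (2 * m)) / Real.log ((m + 1) / m))
    (g : ℕ → ℝ) (hg : ∀ j : ℕ, g j = (j : ℝ) * ((m : ℝ) / ((j : ℝ) - m)) ^ q) :
    (∀ j : ℕ, m + 1 ≤ j → (2 * m : ℝ) ≤ g j) ∧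
      g (2 * m) = 2 * m ∧ g (2 * m + 1) = 2 * m := by
  have hM : (0 : ℝ) < m := by exact_mod_cast hm
  have hslope : slope (fun u => log (m + exp u)) (log m) (log (m + 1)) = q := by
    rw [hq, slope_log_add_exp_log hM]
  have hg_exp : ∀ k : ℕ, 0 < k →
      g (m + k) = exp (log (m + k) - q * (log k - log m)) := fun k hk => by
    rw [hg, ← add_mul_div_rpow_eq_exp hM (by exact_mod_cast hk)]
    push_cast
    ring_nf
  have h2m : (2 * m : ℝ) = exp (log (m + m)) := by rw [exp_log (by positivity), two_mul]
  refine ⟨fun j hj => ?_, ?_, ?_⟩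
  · obtain ⟨k, rfl⟩ := Nat.exists_eq_add_of_le (Nat.le_of_succ_le hj)
    have hk : (0 : ℝ) < k := by exact_mod_cast (by omega : 0 < k)
    have hk_out : log k ∉ Ioo (log m) (log (m + 1)) := fun ⟨h₁, h₂⟩ => by
      have h₁ : m < k := by exact_mod_cast (log_lt_log_iff hM hk).1 h₁
      have h₂ : k < m + 1 := by exact_mod_cast (log_lt_log_iff hk (by positivity)).1 h₂
      omega
    have hsecant := (convexOn_log_add_exp hM.le).secant_le_of_notMem_Ioo (mem_univ _)
      (mem_univ _) (mem_univ _) (log_lt_log hM (lt_add_one _)) hk_out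
    simp only [hslope, exp_log hM, exp_log hk] at hsecant
    rw [hg_exp k (by omega), h2m, exp_le_exp]
    linarith
  · rw [two_mul, hg_exp m (by omega), sub_self, mul_zero, sub_zero, ← h2m]
  · have hstep : q * (log (m + 1) - log m) = log (m + (m + 1)) - log (m + m) := by
      rw [← hslope, mul_comm, ← smul_eq_mul, sub_smul_slope, exp_log hM,
        exp_log (by positivity), vsub_eq_sub]
    rw [show 2 * m + 1 = m + (m + 1) by ring, hg_exp _ (by omega), h2m]
    push_cast
    rw [hstep, sub_sub_cancel]
end

section
/- Fix an integer m ≥ 1, let q = log((2m+1)/(2m))/log((m+1)/m), and define h(j) = (j+1)·(m/(1+j−m))^q for integers j ≥ m. Then h(j) ≥ 2m for all integers j ≥ m. -/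
/-!
Put `r = (m+1)/m` and `a = (j+1-m)/m`. Then `q = log_r ((r+1)/2)`, i.e. `r ^ q = (r+1)/2`, and the
claim is `a ^ q ≤ (a+1)/2`. The concave function `x ^ q - (x+1)/2` vanishes at `1` and at `r`, so
it is nonpositive outside `(1, r)`; and since `j` is an integer, `a` never lies strictly between
`1` and `r = 1 + 1/m`.
-/

open Real Set

theorem ConcaveOn.le_of_eq_of_notMem_Ioo {𝕜 : Type*} [Field 𝕜] [LinearOrder 𝕜]
    [IsStrictOrderedRing 𝕜] {s : Set 𝕜} {f : 𝕜 → 𝕜} (hf : ConcaveOn 𝕜 s f) {x y z : 𝕜}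
    (hx : x ∈ s) (hy : y ∈ s) (hz : z ∈ s) (hxy : x < y) (hfxy : f x = f y) (hzxy : z ∉ Ioo x y) :
    f z ≤ f x := by
  rcases le_or_gt z x with hzx | hxz
  · exact hf.left_le_of_le_right'' hz hy hzx hxy hfxy.le
  · rw [hfxy]
    exact hf.right_le_of_le_left'' hx hz hxy (not_lt.mp fun hzy => hzxy ⟨hxz, hzy⟩) hfxy.ge

theorem Real.rpow_le_add_one_div_two {q r a : ℝ} (hq₀ : 0 ≤ q) (hq₁ : q ≤ 1) (hr : 1 < r)
    (hrq : r ^ q = (r + 1) / 2) (ha : 0 ≤ a) (har : a ∉ Ioo 1 r) : a ^ q ≤ (a + 1) / 2 := by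
  have hconc : ConcaveOn ℝ (Ici 0) fun x : ℝ => x ^ q - (x + 1) / 2 :=
    (concaveOn_rpow hq₀ hq₁).sub (((convexOn_id (convex_Ici 0)).add_const 1).smul one_half_pos.le)
      |>.congr fun x _ => by
        simp only [Pi.sub_apply, Pi.add_apply, id_eq, smul_eq_mul]; ring
  have hle := hconc.le_of_eq_of_notMem_Ioo (mem_Ici.mpr zero_le_one)
    (mem_Ici.mpr (by linarith)) (mem_Ici.mpr ha) hr (by simp [hrq]) har
  simp only [one_rpow] at hle
  linarith

theorem Nat.cast_div_notMem_Ioo_one (k m : ℕ) :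
    (k : ℝ) / m ∉ Ioo 1 (((m : ℝ) + 1) / m) := by
  rintro ⟨h₁, h₂⟩
  rcases Nat.eq_zero_or_pos m with rfl | hm
  · norm_num at h₁
  have hm₀ : (0 : ℝ) < m := by exact_mod_cast hm
  rw [one_lt_div hm₀] at h₁
  rw [div_lt_div_iff_of_pos_right hm₀] at h₂
  have : m < k := by exact_mod_cast h₁
  have : k < m + 1 := by exact_mod_cast h₂
  omega

/-- With `q = log((2m+1)/(2m))/log((m+1)/m)`, the left-endpoint values
`h j = (j+1)·(m/(1+j−m))^q` satisfy `h j ≥ 2m` for all integers `j ≥ m`. -/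
theorem left_endpoint_value_bound (m : ℕ) (hm : 1 ≤ m)
    (q : ℝ) (hq : q = Real.log ((2 * m + 1) / (2 * m)) / Real.log ((m + 1) / m))
    (j : ℕ) (hj : m ≤ j) :
    (2 * m : ℝ) ≤ ((j : ℝ) + 1) * ((m : ℝ) / (1 + (j : ℝ) - m)) ^ q := by
  have hm₀ : (0 : ℝ) < m := by exact_mod_cast hm
  have hjm : (m : ℝ) ≤ j := by exact_mod_cast hj
  set r : ℝ := (m + 1) / m
  set a : ℝ := (j + 1 - m) / m
  have hr : 1 < r := by rw [one_lt_div hm₀]; linarith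
  have hq_logb : q = logb r ((r + 1) / 2) := by
    rw [hq, logb]; congr 2; simp only [r]; field_simp; ring
  have hs : 1 ≤ (r + 1) / 2 := by linarith
  have hrq : r ^ q = (r + 1) / 2 := by rw [hq_logb, rpow_logb (by linarith) hr.ne' (by linarith)]
  have hq₁ : q ≤ 1 := by
    rw [hq_logb]
    exact (logb_le_logb_of_le hr (by linarith) (by linarith)).trans_eq (logb_self_eq_one hr)
  have ha : 0 < a := div_pos (by linarith) hm₀
  have har : a ∉ Ioo 1 r := by
    have := Nat.cast_div_notMem_Ioo_one (j + 1 - m) m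
    rwa [Nat.cast_sub (R := ℝ) (by omega), Nat.cast_add_one] at this
  have hchord := rpow_le_add_one_div_two (hq_logb ▸ logb_nonneg hr hs) hq₁ hr hrq ha.le har
  have hinv : (m : ℝ) / (1 + j - m) = a⁻¹ := by simp only [a, inv_div]; ring
  have hj₁ : (j : ℝ) + 1 = m * (a + 1) := by simp only [a]; field_simp; ring
  rw [hinv, inv_rpow ha.le, ← div_eq_mul_inv, le_div_iff₀ (rpow_pos_of_pos ha q), hj₁]
  linarith [mul_le_mul_of_nonneg_left hchord hm₀.le]
end

section
/- For c > 0, 1 ≤ p ≤ 2, and N ≥ 1, define f_{c,p}(t) = (t/(c−t))^{p/2} on [0,c). Then f_{1,p} (i.e., c = 1) is concave on [0, α] and convex on [α, 1), where α = 1/2 − p/4; equivalently, f_{1,p}''(t) ≤ 0 for t ∈ (0, α) and f_{1,p}''(t) ≥ 0 for t ∈ (α, 1). -/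
/-!
On `(0, 1)` the second derivative of `(t / (1 - t)) ^ q` is
`q (t / (1 - t)) ^ (q - 2) (2t + q - 1) / (1 - t) ^ 4`, whose sign is that of `2t + q - 1`;
it changes sign at `t = (1 - q) / 2`, which is `α = 1/2 - p/4` for `q = p / 2`.
-/

open Set

namespace OddsRpow

/-- The paper's `f_{1,p}` is `oddsRpow (p / 2)`. -/
noncomputable def oddsRpow (q t : ℝ) : ℝ := (t / (1 - t)) ^ q

variable {q x : ℝ}

lemma hasDerivAt_odds (hx : x ≠ 1) :
    HasDerivAt (fun t : ℝ => t / (1 - t)) (1 / (1 - x) ^ 2) x := by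
  have hne : 1 - x ≠ 0 := sub_ne_zero.mpr hx.symm
  refine ((hasDerivAt_id' x).div ((hasDerivAt_id' x).const_sub 1) hne).congr_deriv ?_
  field_simp
  ring

lemma oddsRpow_pos (hx : x ∈ Ioo (0 : ℝ) 1) : 0 < oddsRpow q x :=
  Real.rpow_pos_of_pos (div_pos hx.1 (sub_pos.mpr hx.2)) q

lemma hasDerivAt_oddsRpow (hx : x ∈ Ioo (0 : ℝ) 1) :
    HasDerivAt (oddsRpow q) (q * oddsRpow (q - 1) x / (1 - x) ^ 2) x := by
  have hodds : x / (1 - x) ≠ 0 := (div_pos hx.1 (sub_pos.mpr hx.2)).ne'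
  refine ((hasDerivAt_odds hx.2.ne).rpow_const (Or.inl hodds)).congr_deriv ?_
  unfold oddsRpow
  ring

lemma hasDerivAt_deriv_oddsRpow (hx : x ∈ Ioo (0 : ℝ) 1) :
    HasDerivAt (fun t => q * oddsRpow (q - 1) t / (1 - t) ^ 2)
      (q * oddsRpow (q - 2) x / (1 - x) ^ 4 * (2 * x + q - 1)) x := by
  have hne : 1 - x ≠ 0 := (sub_pos.mpr hx.2).ne'
  have hsq : HasDerivAt (fun t : ℝ => (1 - t) ^ 2) (-(2 * (1 - x))) x := by
    simpa using ((hasDerivAt_id' x).const_sub 1).fun_pow 2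
  refine (((hasDerivAt_oddsRpow (q := q - 1) hx).const_mul q).div hsq
    (pow_ne_zero 2 hne)).congr_deriv ?_
  have hsplit : oddsRpow (q - 1) x = oddsRpow (q - 2) x * (x / (1 - x)) := by
    rw [oddsRpow, show q - 1 = q - 2 + 1 by ring,
      Real.rpow_add_one (div_pos hx.1 (sub_pos.mpr hx.2)).ne']
    rfl
  rw [show q - 1 - 1 = q - 2 by ring, hsplit]
  field_simp
  ring

lemma continuousOn_oddsRpow (hq : 0 ≤ q) : ContinuousOn (oddsRpow q) (Ico 0 1) :=
  (continuousOn_id.div (continuousOn_const.sub continuousOn_id)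
    fun _ ht => (sub_pos.mpr ht.2).ne').rpow_const fun _ _ => Or.inr hq

lemma mul_oddsRpow_div_nonneg (hq : 0 ≤ q) (hx : x ∈ Ioo (0 : ℝ) 1) :
    0 ≤ q * oddsRpow (q - 2) x / (1 - x) ^ 4 :=
  div_nonneg (mul_nonneg hq (oddsRpow_pos hx).le) (pow_nonneg (sub_pos.mpr hx.2).le 4)

lemma mem_Ioo_of_mem_interior {D : Set ℝ} (hD : D ⊆ Ico 0 1) (hx : x ∈ interior D) :
    x ∈ Ioo 0 1 :=
  interior_Ico (a := (0 : ℝ)) (b := 1) ▸ interior_mono hD hx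

theorem concaveOn_oddsRpow (hq : 0 ≤ q) : ConcaveOn ℝ (Icc 0 ((1 - q) / 2)) (oddsRpow q) := by
  have hD : Icc 0 ((1 - q) / 2) ⊆ Ico (0 : ℝ) 1 := Icc_subset_Ico_right (by linarith)
  refine concaveOn_of_hasDerivWithinAt2_nonpos (convex_Icc _ _)
    ((continuousOn_oddsRpow hq).mono hD)
    (fun x hx => (hasDerivAt_oddsRpow (mem_Ioo_of_mem_interior hD hx)).hasDerivWithinAt)
    (fun x hx => (hasDerivAt_deriv_oddsRpow (mem_Ioo_of_mem_interior hD hx)).hasDerivWithinAt)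
    fun x hx => mul_nonpos_of_nonneg_of_nonpos
      (mul_oddsRpow_div_nonneg hq (mem_Ioo_of_mem_interior hD hx)) ?_
  rw [interior_Icc] at hx
  linarith [hx.2]

theorem convexOn_oddsRpow (hq₀ : 0 ≤ q) (hq₁ : q ≤ 1) :
    ConvexOn ℝ (Ico ((1 - q) / 2) 1) (oddsRpow q) := by
  have hD : Ico ((1 - q) / 2) 1 ⊆ Ico (0 : ℝ) 1 := Ico_subset_Ico_left (by linarith)
  refine convexOn_of_hasDerivWithinAt2_nonneg (convex_Ico _ _)
    ((continuousOn_oddsRpow hq₀).mono hD)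
    (fun x hx => (hasDerivAt_oddsRpow (mem_Ioo_of_mem_interior hD hx)).hasDerivWithinAt)
    (fun x hx => (hasDerivAt_deriv_oddsRpow (mem_Ioo_of_mem_interior hD hx)).hasDerivWithinAt)
    fun x hx => mul_nonneg (mul_oddsRpow_div_nonneg hq₀ (mem_Ioo_of_mem_interior hD hx)) ?_
  rw [interior_Ico] at hx
  linarith [hx.1]

end OddsRpow

open OddsRpow in
/-- For `1 ≤ p ≤ 2`, the function `f_{1,p}(t) = (t/(1−t))^(p/2)` is concave on
`[0, α]` and convex on `[α, 1)`, where `α = 1/2 − p/4`. -/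
theorem f_one_p_concave_convex (p : ℝ) (hp1 : 1 ≤ p) (hp2 : p ≤ 2) :
    ConcaveOn ℝ (Set.Icc (0 : ℝ) (1 / 2 - p / 4))
      (fun t : ℝ => (t / (1 - t)) ^ (p / 2)) ∧
    ConvexOn ℝ (Set.Ico (1 / 2 - p / 4) (1 : ℝ))
      (fun t : ℝ => (t / (1 - t)) ^ (p / 2)) := by
  rw [show (1 : ℝ) / 2 - p / 4 = (1 - p / 2) / 2 by ring]
  exact ⟨concaveOn_oddsRpow (by linarith), convexOn_oddsRpow (by linarith) (by linarith)⟩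
end

section
/- For any real N×N symmetric positive semidefinite matrix A of rank d < N with all diagonal entries equal to 1, and any 1 ≤ p ≤ 2, the p-frame energy satisfies E_p(A) = ∑_{i≠j}|A_{i,j}|^p ≥ M(1/(N−d), p, N), where M(c,p,N) is the minimum of ∑_{i=1}^N (t_i/(c−t_i))^{p/2} over t_i ∈ [0,c) with ∑ t_i = 1. -/
/-!
Let `P` be the orthogonal projection onto the kernel of `A`; it has trace `N - d`, and
`xᵢ := Pᵢᵢ` satisfies `∑ⱼ Pⱼᵢ² = xᵢ`, so the off-diagonal part of the `i`-th column of `P` has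
squared length `xᵢ (1 - xᵢ)`. Reading `(A P)ᵢᵢ = 0` with `Aᵢᵢ = 1` gives
`xᵢ = -∑_{j ≠ i} Aᵢⱼ Pⱼᵢ`, and Cauchy–Schwarz yields `xᵢ / (1 - xᵢ) ≤ ∑_{j ≠ i} Aᵢⱼ²`. For
`p ≤ 2` the `ℓ²` norm is dominated by the `ℓᵖ` norm, so `(xᵢ / (1 - xᵢ))^(p/2)` is at most the
`i`-th row of the energy. The numbers `tᵢ := xᵢ / (N - d)` are then admissible for `M`.
-/

open Finset Matrix

theorem Finset.sum_rpow_le_rpow_sum {ι : Type*} (s : Finset ι) {f : ι → ℝ} {r : ℝ} (hr : 1 ≤ r)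
    (hf : ∀ i ∈ s, 0 ≤ f i) : ∑ i ∈ s, f i ^ r ≤ (∑ i ∈ s, f i) ^ r := by
  induction s using Finset.cons_induction with
  | empty => simp [Real.zero_rpow (by linarith : r ≠ 0)]
  | cons a s ha ih =>
    obtain ⟨hfa, hfs⟩ := (forall_mem_cons ha _).mp hf
    rw [sum_cons, sum_cons]
    calc f a ^ r + ∑ i ∈ s, f i ^ r ≤ f a ^ r + (∑ i ∈ s, f i) ^ r := by grw [ih hfs]
      _ ≤ _ := Real.add_rpow_le_rpow_add hfa (sum_nonneg hfs) hr

theorem Real.rpow_sum_sq_le_sum_abs_rpow {ι : Type*} (s : Finset ι) (a : ι → ℝ) {p : ℝ}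
    (hp0 : 0 < p) (hp2 : p ≤ 2) : (∑ i ∈ s, a i ^ 2) ^ (p / 2) ≤ ∑ i ∈ s, |a i| ^ p := by
  have hsq (i : ι) : a i ^ 2 = (|a i| ^ p) ^ (2 / p) := by
    rw [← Real.rpow_mul (abs_nonneg _), mul_div_cancel₀ _ hp0.ne', Real.rpow_two, sq_abs]
  calc (∑ i ∈ s, a i ^ 2) ^ (p / 2) ≤ ((∑ i ∈ s, |a i| ^ p) ^ (2 / p)) ^ (p / 2) := by
        simp only [hsq]
        gcongr
        exact sum_rpow_le_rpow_sum s ((one_le_div₀ hp0).mpr hp2) fun i _ => by positivity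
    _ = ∑ i ∈ s, |a i| ^ p := by
        rw [← Real.rpow_mul (by positivity), div_mul_div_cancel₀' two_ne_zero, div_self hp0.ne',
          Real.rpow_one]

theorem le_sum_sq_mul_one_sub_of_le_sum_mul {ι : Type*} (s : Finset ι) (a b : ι → ℝ) {x : ℝ}
    (hx : x ≤ ∑ i ∈ s, a i * b i) (hb : ∑ i ∈ s, b i ^ 2 ≤ x * (1 - x)) :
    x ≤ (∑ i ∈ s, a i ^ 2) * (1 - x) := by
  have hx0 : 0 ≤ x := by nlinarith [sum_nonneg fun i (_ : i ∈ s) => sq_nonneg (b i)]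
  rcases hx0.eq_or_lt with rfl | hx0
  · simpa using sum_nonneg fun i (_ : i ∈ s) => sq_nonneg (a i)
  refine le_of_mul_le_mul_left ?_ hx0
  calc x * x ≤ (∑ i ∈ s, a i * b i) ^ 2 := by rw [sq]; exact mul_self_le_mul_self hx0.le hx
    _ ≤ (∑ i ∈ s, a i ^ 2) * ∑ i ∈ s, b i ^ 2 := sum_mul_sq_le_sq_mul_sq s a b
    _ ≤ (∑ i ∈ s, a i ^ 2) * (x * (1 - x)) := by gcongr
    _ = x * ((∑ i ∈ s, a i ^ 2) * (1 - x)) := by ring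

theorem Matrix.IsHermitian.exists_isIdempotentElem_mul_eq_zero {n 𝕜 : Type*} [Fintype n]
    [DecidableEq n] [RCLike 𝕜] {A : Matrix n n 𝕜} (hA : A.IsHermitian) :
    ∃ P : Matrix n n 𝕜, P.IsHermitian ∧ IsIdempotentElem P ∧ A * P = 0 ∧
      P.trace + A.rank = Fintype.card n := by
  let f : ℝ → ℝ := Set.indicator {0} 1
  have hf : ContinuousOn f (spectrum ℝ A) := A.finite_real_spectrum.continuousOn _
  refine ⟨cfc f A, cfc_predicate f A, ?_, ?_, ?_⟩
  · rw [IsIdempotentElem, ← cfc_mul f f A]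
    congr 1
    ext x
    by_cases hx : x = 0 <;> simp [f, hx]
  · conv_lhs => enter [1]; rw [← cfc_id' ℝ A]
    rw [← cfc_mul _ f A, ← cfc_zero ℝ A]
    congr 1
    ext x
    by_cases hx : x = 0 <;> simp [f, hx]
  · rw [cfc_eq hA, IsHermitian.cfc, Unitary.conjStarAlgAut_apply, trace_mul_cycle,
      Unitary.coe_star_mul_self, one_mul, trace_diagonal, hA.rank_eq_card_non_zero_eigs]
    simp only [f, Function.comp_apply, Set.indicator_apply, Set.mem_singleton_iff, Pi.one_apply,
      apply_ite, RCLike.ofReal_one, RCLike.ofReal_zero, sum_boole, Fintype.card_subtype]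
    norm_cast
    exact card_filter_add_card_filter_not _

namespace Matrix

variable {n : Type*} [Fintype n] {A P : Matrix n n ℝ}

theorem IsHermitian.sum_sq_apply_eq_diag_of_isIdempotentElem (hP : P.IsHermitian)
    (hPP : IsIdempotentElem P) (i : n) : ∑ j, P j i ^ 2 = P i i := by
  conv_rhs => rw [← hPP]
  rw [mul_apply]
  refine sum_congr rfl fun j _ => ?_
  rw [sq, ← hP.apply j i, star_trivial]

theorem IsHermitian.diag_nonneg_of_isIdempotentElem (hP : P.IsHermitian)
    (hPP : IsIdempotentElem P) (i : n) : 0 ≤ P i i := by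
  rw [← hP.sum_sq_apply_eq_diag_of_isIdempotentElem hPP i]
  exact sum_nonneg fun j _ => sq_nonneg _

variable [DecidableEq n]

theorem IsHermitian.sum_erase_sq_apply_of_isIdempotentElem (hP : P.IsHermitian)
    (hPP : IsIdempotentElem P) (i : n) :
    ∑ j ∈ univ.erase i, P j i ^ 2 = P i i * (1 - P i i) := by
  have h := hP.sum_sq_apply_eq_diag_of_isIdempotentElem hPP i
  rw [← add_sum_erase _ _ (mem_univ i)] at h
  linarith

theorem diag_eq_sum_erase_of_mul_eq_zero (hAP : A * P = 0) {i : n} (hAi : A i i = 1) :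
    P i i = ∑ j ∈ univ.erase i, -A i j * P j i := by
  have h := congrFun (congrFun hAP i) i
  rw [mul_apply, zero_apply, ← add_sum_erase _ _ (mem_univ i), hAi, one_mul] at h
  simp only [neg_mul, sum_neg_distrib]
  linarith

theorem diag_le_sum_erase_sq_mul_one_sub (hP : P.IsHermitian) (hPP : IsIdempotentElem P)
    (hAP : A * P = 0) {i : n} (hAi : A i i = 1) :
    P i i ≤ (∑ j ∈ univ.erase i, A i j ^ 2) * (1 - P i i) := by
  simpa only [neg_sq] using le_sum_sq_mul_one_sub_of_le_sum_mul (univ.erase i)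
    (fun j => -A i j) (fun j => P j i) (diag_eq_sum_erase_of_mul_eq_zero hAP hAi).le
    (hP.sum_erase_sq_apply_of_isIdempotentElem hPP i).le

theorem diag_lt_one_of_mul_eq_zero (hP : P.IsHermitian) (hPP : IsIdempotentElem P)
    (hAP : A * P = 0) {i : n} (hAi : A i i = 1) : P i i < 1 := by
  have h := diag_le_sum_erase_sq_mul_one_sub hP hPP hAP hAi
  have hS : 0 ≤ ∑ j ∈ univ.erase i, A i j ^ 2 := sum_nonneg fun j _ => sq_nonneg _
  by_contra! h1
  nlinarith

theorem rpow_diag_div_one_sub_le (hP : P.IsHermitian) (hPP : IsIdempotentElem P)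
    (hAP : A * P = 0) {i : n} (hAi : A i i = 1) {p : ℝ} (hp0 : 0 < p) (hp2 : p ≤ 2) :
    (P i i / (1 - P i i)) ^ (p / 2) ≤ ∑ j ∈ univ.erase i, |A i j| ^ p := by
  have hlt := sub_pos.mpr (diag_lt_one_of_mul_eq_zero hP hPP hAP hAi)
  calc (P i i / (1 - P i i)) ^ (p / 2) ≤ (∑ j ∈ univ.erase i, A i j ^ 2) ^ (p / 2) := by
        gcongr
        · exact div_nonneg (hP.diag_nonneg_of_isIdempotentElem hPP i) hlt.le
        · exact (div_le_iff₀ hlt).mpr (diag_le_sum_erase_sq_mul_one_sub hP hPP hAP hAi)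
    _ ≤ ∑ j ∈ univ.erase i, |A i j| ^ p := Real.rpow_sum_sq_le_sum_abs_rpow _ _ hp0 hp2

end Matrix

/-- Glazyrin's lemma: for an `N×N` real positive semidefinite matrix `A` of rank
`d < N` with unit diagonal and `1 ≤ p ≤ 2`, the `p`-frame energy is bounded
below by `M(1/(N−d), p, N)`, the infimum of `∑ (tᵢ/(c−tᵢ))^(p/2)` over
`tᵢ ∈ [0,c)` with `∑ tᵢ = 1`, where `c = 1/(N−d)`. -/
theorem energy_ge_relaxed_min (N d : ℕ) (hd : d < N) (p : ℝ) (hp1 : 1 ≤ p) (hp2 : p ≤ 2)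
    (A : Matrix (Fin N) (Fin N) ℝ) (hA : A.PosSemidef) (hrank : A.rank = d)
    (hdiag : ∀ i, A i i = 1) :
    sInf {s : ℝ | ∃ t : Fin N → ℝ,
        (∀ i, t i ∈ Set.Ico (0 : ℝ) (1 / ((N : ℝ) - d))) ∧ (∑ i, t i) = 1 ∧
        s = ∑ i, (t i / (1 / ((N : ℝ) - d) - t i)) ^ (p / 2)} ≤
      ∑ i, ∑ j, if i ≠ j then |A i j| ^ p else 0 := by
  obtain ⟨P, hP, hPP, hAP, htr⟩ := hA.isHermitian.exists_isIdempotentElem_mul_eq_zero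
  have hNd : (0 : ℝ) < N - d := sub_pos.mpr (Nat.cast_lt.mpr hd)
  have htrace : ∑ i, P i i = N - d := by
    change P.trace = _
    rw [eq_sub_iff_add_eq, ← hrank, htr, Fintype.card_fin]
  have hlt (i : Fin N) : P i i < 1 := diag_lt_one_of_mul_eq_zero hP hPP hAP (hdiag i)
  calc _ ≤ ∑ i, (P i i / (1 - P i i)) ^ (p / 2) := by
        refine csInf_le ⟨0, ?_⟩ ⟨fun i => P i i / (N - d), fun i => ⟨?_, ?_⟩, ?_, ?_⟩
        · rintro _ ⟨t, ht, -, rfl⟩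
          exact sum_nonneg fun i _ =>
            Real.rpow_nonneg (div_nonneg (ht i).1 (sub_nonneg.mpr (ht i).2.le)) _
        · exact div_nonneg (hP.diag_nonneg_of_isIdempotentElem hPP i) hNd.le
        · exact div_lt_div_of_pos_right (hlt i) hNd
        · rw [← sum_div, htrace, div_self hNd.ne']
        · refine sum_congr rfl fun i _ => ?_
          rw [← sub_div, div_div_div_cancel_right₀ hNd.ne']
    _ ≤ _ := sum_le_sum fun i _ => by
        rw [← sum_filter, filter_ne]
        exact rpow_diag_div_one_sub_le hP hPP hAP (hdiag i) (by linarith) hp2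
end

section
/- For m ≥ 1 and p_{0,m} = 2·log((2m+1)/(2m))/log((m+1)/m), if x ≥ 1/2 − p_{0,m}/4 and x < 1/j for a positive integer j, then j ≤ 4m. -/
/-!
With `a = log((2m+1)/(2m))` and `b = log((m+1)/m)` the claim reduces to
`(4m+1) a ≤ (4m-1) b`, i.e. `p_{0,m} ≤ 2 - 4/(4m+1)`, so that `x ≥ 1/(4m+1)`
and hence `1/j > 1/(4m+1)`. For `m ≥ 2` the tangent-line bounds
`1/(t+1) ≤ log((t+1)/t) ≤ 1/t` suffice; for `m = 1` it is `(3/2)^5 ≤ 2^3`.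
-/

open Real

-- The exponent `p_{0,m}` of the paper.
noncomputable def p0 (m : ℕ) : ℝ :=
  2 * log ((2 * m + 1) / (2 * m)) / log ((m + 1) / m)

lemma log_add_one_div_self_le {t : ℝ} (ht : 0 < t) : log ((t + 1) / t) ≤ 1 / t := by
  have h := log_le_sub_one_of_pos (x := (t + 1) / t) (by positivity)
  rwa [show (t + 1) / t - 1 = 1 / t by field_simp; ring] at h

lemma one_div_add_one_le_log_add_one_div_self {t : ℝ} (ht : 0 < t) :
    1 / (t + 1) ≤ log ((t + 1) / t) := by
  have h := one_sub_inv_le_log_of_pos (x := (t + 1) / t) (by positivity)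
  rwa [show 1 - ((t + 1) / t)⁻¹ = 1 / (t + 1) by field_simp; ring] at h

lemma mul_log_two_mul_add_one_le_of_two_le {M : ℝ} (hM : 2 ≤ M) :
    (4 * M + 1) * log ((2 * M + 1) / (2 * M)) ≤ (4 * M - 1) * log ((M + 1) / M) := by
  have hM0 : 0 < M := by linarith
  calc (4 * M + 1) * log ((2 * M + 1) / (2 * M))
      ≤ (4 * M + 1) * (1 / (2 * M)) := by gcongr; exact log_add_one_div_self_le (by positivity)
    _ ≤ (4 * M - 1) * (1 / (M + 1)) := by
        rw [mul_one_div, mul_one_div, div_le_div_iff₀ (by positivity) (by positivity)]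
        nlinarith
    _ ≤ (4 * M - 1) * log ((M + 1) / M) := by
        gcongr
        · linarith
        · exact one_div_add_one_le_log_add_one_div_self hM0

lemma mul_log_two_mul_add_one_le (m : ℕ) (hm : 1 ≤ m) :
    (4 * (m : ℝ) + 1) * log ((2 * m + 1) / (2 * m)) ≤ (4 * (m : ℝ) - 1) * log ((m + 1) / m) := by
  obtain rfl | hm2 := hm.eq_or_lt
  · norm_num
    rw [← log_rpow (by norm_num), ← log_rpow (by norm_num)]
    exact log_le_log (by positivity) (by norm_num)
  · exact mul_log_two_mul_add_one_le_of_two_le (by exact_mod_cast hm2)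

lemma one_div_le_one_div_two_sub_p0_div_four (m : ℕ) (hm : 1 ≤ m) :
    1 / (4 * (m : ℝ) + 1) ≤ 1 / 2 - p0 m / 4 := by
  have hm0 : (0 : ℝ) < m := by exact_mod_cast hm
  have hb : 0 < log (((m : ℝ) + 1) / m) :=
    log_pos ((one_lt_div hm0).2 (by linarith))
  have hp0 : p0 m ≤ 2 * (4 * m - 1) / (4 * m + 1) := by
    rw [p0, div_le_div_iff₀ hb (by positivity)]
    nlinarith [mul_log_two_mul_add_one_le m hm]
  have h : 1 / 2 - 2 * (4 * (m : ℝ) - 1) / (4 * m + 1) / 4 = 1 / (4 * m + 1) := by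
    field_simp; ring
  linarith

theorem excess_mass_count_bound_general (m : ℕ) (hm : 1 ≤ m) (j : ℕ) (x : ℝ)
    (hx1 : 1 / 2 - (2 * Real.log ((2 * m + 1) / (2 * m)) /
      Real.log ((m + 1) / m)) / 4 ≤ x)
    (hx2 : x < 1 / (j : ℝ)) :
    j ≤ 4 * m := by
  have h : 1 / (4 * (m : ℝ) + 1) < 1 / j :=
    (one_div_le_one_div_two_sub_p0_div_four m hm).trans_lt (hx1.trans_lt hx2)
  have hj : (j : ℝ) < 4 * m + 1 := lt_of_one_div_lt_one_div (by positivity) h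
  exact Nat.lt_succ_iff.1 (by exact_mod_cast hj)

/-- If `x ≥ 1/2 − p_{0,m}/4` (with `p_{0,m} = 2·log((2m+1)/(2m))/log((m+1)/m)`)
and `x < 1/j` for a positive integer `j`, then `j ≤ 4m`. -/
theorem excess_mass_count_bound (m : ℕ) (hm : 1 ≤ m) (j : ℕ) (hj : 1 ≤ j) (x : ℝ)
    (hx1 : 1 / 2 - (2 * Real.log ((2 * m + 1) / (2 * m)) /
      Real.log ((m + 1) / m)) / 4 ≤ x)
    (hx2 : x < 1 / (j : ℝ)) :
    j ≤ 4 * m :=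
  excess_mass_count_bound_general m hm j x hx1 hx2
end
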